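/- arXiv:1306.0412 — 3 statements merged into one kernel-verified Lean document; each statement's English description precedes it below -/
import Mathlib

section
/- Let T be a metric space, Y a geodesic metric space, c : T → ℝ and b : Y → ℝ be 1-Lipschitz maps, and suppose that for every x ∈ T there is a geodesic line β_x : ℝ → T with β_x(0) = x and c(β_x(u)) = c(x) + u for all u, and similarly for every y ∈ Y there is a geodesic line α_y : ℝ → Y with α_y(0) = y and b(α_y(u)) = b(y) + u. Then the fibre product M = {(x,y) ∈ T × Y : c(x) = b(y)} is path-connected, provided T is geodesic. -/
/-- A pseudometric space is geodesic if any two points are joined by a geodesic segment. -/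
def IsGeodesicSpace (X : Type*) [PseudoMetricSpace X] : Prop :=
  ∀ x y : X, ∃ γ : ℝ → X, γ 0 = x ∧ γ (dist x y) = y ∧
    ∀ s ∈ Set.Icc (0 : ℝ) (dist x y), ∀ t ∈ Set.Icc (0 : ℝ) (dist x y),
      dist (γ s) (γ t) = |s - t|

/-- `γ : ℝ → X` is a geodesic line: an isometric embedding of `ℝ`. -/
def IsGeodesicLine {X : Type*} [PseudoMetricSpace X] (γ : ℝ → X) : Prop :=
  ∀ s t : ℝ, dist (γ s) (γ t) = |s - t|

lemma IsGeodesicLine.lipschitz {X : Type*} [PseudoMetricSpace X] {α : ℝ → X}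
    (h : IsGeodesicLine α) : LipschitzWith 1 α :=
  LipschitzWith.of_dist_le_mul fun s t => by
    rw [h s t, Real.dist_eq]; simp

/-- Auxiliary: continuity of the composed path map used below. -/
lemma aux_cont {X Z : Type*} [MetricSpace X] [TopologicalSpace Z]
    {σ : ℝ → X} {d : ℝ} (hd : 0 ≤ d)
    (hσ : ∀ s ∈ Set.Icc (0 : ℝ) d, ∀ t ∈ Set.Icc (0 : ℝ) d,
      dist (σ s) (σ t) = |s - t|)
    {f : Z → ℝ} (hf : Continuous f) (hfmem : ∀ z, f z ∈ Set.Icc (0 : ℝ) d) :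
    Continuous fun z => σ (f z) := by
  have hlip : LipschitzOnWith 1 σ (Set.Icc (0 : ℝ) d) := by
    apply LipschitzOnWith.of_dist_le_mul
    intro s hs t ht
    rw [hσ s hs t ht, Real.dist_eq]; simp
  exact hlip.continuousOn.comp_continuous hf hfmem

/-- let `c : T → ℝ`, `b : Y → ℝ` be 1-Lipschitz maps on geodesic spaces such that
through every point there passes a geodesic line along which they increase at unit speed.
Then the fibre product `M = {(x,y) : c x = b y}` is path-connected. -/
theorem fibreProduct_isPathConnected
    {T Y : Type*} [MetricSpace T] [MetricSpace Y] [Nonempty T] [Nonempty Y]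
    (hT : IsGeodesicSpace T) (hY : IsGeodesicSpace Y)
    (c : T → ℝ) (b : Y → ℝ)
    (hc : LipschitzWith 1 c) (hb : LipschitzWith 1 b)
    (hlineT : ∀ x : T, ∃ β : ℝ → T, IsGeodesicLine β ∧ β 0 = x ∧
      ∀ u : ℝ, c (β u) = c x + u)
    (hlineY : ∀ y : Y, ∃ α : ℝ → Y, IsGeodesicLine α ∧ α 0 = y ∧
      ∀ u : ℝ, b (α u) = b y + u) :
    IsPathConnected {p : T × Y | c p.1 = b p.2} := by
  set M : Set (T × Y) := {p : T × Y | c p.1 = b p.2} with hM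
  -- Step 1: moving the T-coordinate along a geodesic, compensating in Y along a line.
  have step1 : ∀ x₁ x₂ : T, ∀ y₁ : Y, c x₁ = b y₁ →
      ∃ y₂ : Y, b y₂ = c x₂ ∧ JoinedIn M (x₁, y₁) (x₂, y₂) := by
    intro x₁ x₂ y₁ h1
    obtain ⟨σ, hσ0, hσd, hσ⟩ := hT x₁ x₂
    obtain ⟨α, hαgeo, hα0, hαb⟩ := hlineY y₁
    set d := dist x₁ x₂ with hd
    have hd0 : 0 ≤ d := dist_nonneg
    refine ⟨α (c x₂ - b y₁), by rw [hαb]; ring, ?_⟩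
    have hmem : ∀ t : unitInterval, (t : ℝ) * d ∈ Set.Icc (0 : ℝ) d := by
      intro t
      constructor
      · exact mul_nonneg t.2.1 hd0
      · calc (t : ℝ) * d ≤ 1 * d := by
              exact mul_le_mul_of_nonneg_right t.2.2 hd0
          _ = d := one_mul d
    have hcont1 : Continuous fun t : unitInterval => σ ((t : ℝ) * d) :=
      aux_cont hd0 hσ (continuous_subtype_val.mul continuous_const) hmem
    refine ⟨⟨⟨fun t => (σ ((t : ℝ) * d), α (c (σ ((t : ℝ) * d)) - b y₁)), ?_⟩, ?_, ?_⟩, ?_⟩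
    · exact hcont1.prodMk (hαgeo.lipschitz.continuous.comp
        ((hc.continuous.comp hcont1).sub continuous_const))
    · simp only [Set.Icc.coe_zero, zero_mul, hσ0, h1, sub_self, hα0]
    · simp only [Set.Icc.coe_one, one_mul, ← hd, hσd]
    · intro t
      simp only [hM, Set.mem_setOf_eq, Path.coe_mk_mk, hαb]
      ring
  -- Step 2: moving the Y-coordinate along a geodesic over a fixed x, compensating in T.
  have step2 : ∀ x : T, ∀ y₁ y₂ : Y, b y₁ = c x → b y₂ = c x →
      JoinedIn M (x, y₁) (x, y₂) := by
    intro x y₁ y₂ h1 h2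
    obtain ⟨σ, hσ0, hσd, hσ⟩ := hY y₁ y₂
    obtain ⟨β, hβgeo, hβ0, hβc⟩ := hlineT x
    set d := dist y₁ y₂ with hd
    have hd0 : 0 ≤ d := dist_nonneg
    have hmem : ∀ t : unitInterval, (t : ℝ) * d ∈ Set.Icc (0 : ℝ) d := by
      intro t
      exact ⟨mul_nonneg t.2.1 hd0, by
        calc (t : ℝ) * d ≤ 1 * d := mul_le_mul_of_nonneg_right t.2.2 hd0
          _ = d := one_mul d⟩
    have hcont1 : Continuous fun t : unitInterval => σ ((t : ℝ) * d) :=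
      aux_cont hd0 hσ (continuous_subtype_val.mul continuous_const) hmem
    refine ⟨⟨⟨fun t => (β (b (σ ((t : ℝ) * d)) - c x), σ ((t : ℝ) * d)), ?_⟩, ?_, ?_⟩, ?_⟩
    · exact (hβgeo.lipschitz.continuous.comp
        ((hb.continuous.comp hcont1).sub continuous_const)).prodMk hcont1
    · simp only [Set.Icc.coe_zero, zero_mul, hσ0, h1, sub_self, hβ0]
    · simp only [Set.Icc.coe_one, one_mul, ← hd, hσd, h2, sub_self, hβ0]
    · intro t
      simp only [hM, Set.mem_setOf_eq, Path.coe_mk_mk, hβc]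
      ring
  -- Assemble.
  obtain ⟨x₀⟩ := ‹Nonempty T›
  obtain ⟨y⟩ := ‹Nonempty Y›
  obtain ⟨α, hαgeo, hα0, hαb⟩ := hlineY y
  set y₀ := α (c x₀ - b y) with hy₀
  have hbase : (x₀, y₀) ∈ M := by simp [hM, hy₀, hαb]
  refine ⟨(x₀, y₀), hbase, ?_⟩
  rintro ⟨x₂, y₂⟩ hq
  obtain ⟨y', hy', hjoin⟩ := step1 x₀ x₂ y₀ hbase
  exact hjoin.trans (step2 x₂ y' y₂ hy' hq.symm)
end

section
/- Under the hypotheses of the fibre-product construction (T and Y geodesic, c : T → ℝ and b : Y → ℝ 1-Lipschitz admitting through every point a geodesic line along which they increase at unit speed), the shortest-path metric d_M on M = {(x,y) : c(x) = b(y)} satisfies d ≤ d_M ≤ 4·d, where d is the restriction of the sum metric on T × Y; hence d and d_M are bilipschitz equivalent. -/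
/-- The shortest-path (length) metric on a subset `M` of a pseudometric space: the infimum of
lengths (total variations) of continuous paths in `M` joining two points. -/
noncomputable def pathMetric {X : Type*} [PseudoMetricSpace X] (M : Set X) (p q : X) : ENNReal :=
  ⨅ (γ : ℝ → X) (_ : ContinuousOn γ (Set.Icc (0 : ℝ) 1))
    (_ : Set.MapsTo γ (Set.Icc (0 : ℝ) 1) M) (_ : γ 0 = p) (_ : γ 1 = q),
    eVariationOn γ (Set.Icc (0 : ℝ) 1)


/-!
A path in `M` from `p` to `q` is at least `d(p, q)` long. Conversely, write `p = (x₀, y₀)`,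
`q = (x₁, y₁)` and let `y'` be the point of the geodesic line `α` through `y₀` on which `b = c x₁`.
First move `x` along a geodesic from `x₀` to `x₁`, staying in `M` by taking `y = α (c x - b y₀)`;
then move `y` along a geodesic from `y'` to `y₁`, taking `x = β (b y - c x₁)` on the line `β`
through `x₁`. Since `c`, `b` are `1`-Lipschitz and `α`, `β` isometric, both legs are `2`-Lipschitz
in the sum metric, and the parameter length is `d(x₀, x₁) + d(y', y₁) ≤ 2 d(x₀, x₁) + d(y₀, y₁)`
because `d(y₀, y') = |c x₁ - c x₀|`. Hence the path has length at most `4 d(p, q)`.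
-/

open Set NNReal

section PathMetric

variable {X : Type*} [PseudoMetricSpace X]

lemma ofReal_dist_le_pathMetric (M : Set X) (p q : X) :
    ENNReal.ofReal (dist p q) ≤ pathMetric M p q := by
  rw [← edist_dist]
  refine le_iInf fun γ => le_iInf fun _ => le_iInf fun _ => le_iInf fun h0 => le_iInf fun h1 => ?_
  rw [← h0, ← h1]
  exact eVariationOn.edist_le γ (left_mem_Icc.2 zero_le_one) (right_mem_Icc.2 zero_le_one)

lemma pathMetric_le_eVariationOn {M : Set X} {γ : ℝ → X} (hγ : ContinuousOn γ (Icc 0 1))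
    (hM : MapsTo γ (Icc 0 1) M) : pathMetric M (γ 0) (γ 1) ≤ eVariationOn γ (Icc 0 1) :=
  iInf_le_of_le γ <| iInf_le_of_le hγ <| iInf_le_of_le hM <| iInf_le_of_le rfl <| iInf_le _ rfl

lemma pathMetric_le_of_lipschitzOnWith {M : Set X} {γ : ℝ → X} {K : ℝ≥0} {L : ℝ} (hL : 0 ≤ L)
    (hγ : LipschitzOnWith K γ (Icc 0 L)) (hM : MapsTo γ (Icc 0 L) M) :
    pathMetric M (γ 0) (γ L) ≤ ENNReal.ofReal (K * L) := by
  have himage : (L * ·) '' Icc (0 : ℝ) 1 = Icc 0 L := by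
    simpa using image_mul_left_Icc hL zero_le_one
  have hmaps : MapsTo (L * ·) (Icc (0 : ℝ) 1) (Icc 0 L) := himage ▸ mapsTo_image _ _
  calc pathMetric M (γ 0) (γ L) = pathMetric M ((γ ∘ (L * ·)) 0) ((γ ∘ (L * ·)) 1) := by simp
    _ ≤ eVariationOn (γ ∘ (L * ·)) (Icc 0 1) :=
        pathMetric_le_eVariationOn (hγ.continuousOn.comp (by fun_prop) hmaps) (hM.comp hmaps)
    _ = eVariationOn γ (Icc 0 L) := by
        rw [eVariationOn.comp_eq_of_monotoneOn _ _ ((monotone_mul_left_of_nonneg hL).monotoneOn _),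
          himage]
    _ ≤ K * eVariationOn id (Icc 0 L) := hγ.comp_eVariationOn_le (mapsTo_id _)
    _ = ENNReal.ofReal (K * L) := by
        rw [eVariationOn_id_Icc, sub_zero, ENNReal.ofReal_mul K.coe_nonneg,
          ENNReal.ofReal_coe_nnreal]

lemma LipschitzOnWith.congr {Y : Type*} [PseudoMetricSpace Y] {f g : X → Y} {K : ℝ≥0} {s : Set X}
    (hf : LipschitzOnWith K f s) (hfg : EqOn g f s) : LipschitzOnWith K g s := fun x hx y hy => by
  rw [hfg hx, hfg hy]
  exact hf hx hy

lemma LipschitzOnWith.Icc_union_Icc {f : ℝ → X} {K : ℝ≥0} {a b c : ℝ}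
    (h₁ : LipschitzOnWith K f (Icc a b)) (h₂ : LipschitzOnWith K f (Icc b c)) :
    LipschitzOnWith K f (Icc a c) := by
  have hle : ∀ x ∈ Icc a c, ∀ y ∈ Icc a c, x ≤ y → dist (f x) (f y) ≤ K * dist x y := by
    intro x hx y hy hxy
    rcases le_total y b with hyb | hby
    · exact h₁.dist_le_mul x ⟨hx.1, hxy.trans hyb⟩ y ⟨hy.1, hyb⟩
    rcases le_total b x with hbx | hxb
    · exact h₂.dist_le_mul x ⟨hbx, hx.2⟩ y ⟨hbx.trans hxy, hy.2⟩
    calc dist (f x) (f y) ≤ dist (f x) (f b) + dist (f b) (f y) := dist_triangle _ _ _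
      _ ≤ K * dist x b + K * dist b y :=
          add_le_add (h₁.dist_le_mul x ⟨hx.1, hxb⟩ b ⟨hx.1.trans hxb, le_rfl⟩)
            (h₂.dist_le_mul b ⟨le_rfl, hby.trans hy.2⟩ y ⟨hby, hy.2⟩)
      _ = K * dist x y := by
          rw [← mul_add, dist_add_dist_of_mem_segment (segment_eq_Icc hxy ▸ ⟨hxb, hby⟩)]
  refine LipschitzOnWith.of_dist_le_mul fun x hx y hy => ?_
  rcases le_total x y with hxy | hyx
  · exact hle x hx y hy hxy
  · rw [dist_comm, dist_comm x]
    exact hle y hy x hx hyx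

lemma pathMetric_le_of_lipschitzOnWith_trans {M : Set X} {γ₁ γ₂ : ℝ → X} {K : ℝ≥0} {L₁ L₂ : ℝ}
    (hL₁ : 0 ≤ L₁) (hL₂ : 0 ≤ L₂)
    (hγ₁ : LipschitzOnWith K γ₁ (Icc 0 L₁)) (hγ₂ : LipschitzOnWith K γ₂ (Icc 0 L₂))
    (hM₁ : MapsTo γ₁ (Icc 0 L₁) M) (hM₂ : MapsTo γ₂ (Icc 0 L₂) M) (hjoin : γ₁ L₁ = γ₂ 0) :
    pathMetric M (γ₁ 0) (γ₂ L₂) ≤ ENNReal.ofReal (K * (L₁ + L₂)) := by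
  set γ : ℝ → X := fun t => if t ≤ L₁ then γ₁ t else γ₂ (t - L₁)
  have hshift : MapsTo (· - L₁) (Icc L₁ (L₁ + L₂)) (Icc 0 L₂) := fun t ht =>
    ⟨by linarith [ht.1], by linarith [ht.2]⟩
  have heq₁ : EqOn γ γ₁ (Icc 0 L₁) := fun t ht => if_pos ht.2
  have heq₂ : EqOn γ (γ₂ ∘ (· - L₁)) (Icc L₁ (L₁ + L₂)) := by
    intro t ht
    by_cases htL : t ≤ L₁
    · simp [γ, le_antisymm htL ht.1, hjoin]
    · simp [γ, htL]
  have hlip : LipschitzOnWith K γ (Icc 0 (L₁ + L₂)) := by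
    refine (hγ₁.congr heq₁).Icc_union_Icc (LipschitzOnWith.congr ?_ heq₂)
    have hsub : LipschitzWith 1 (· - L₁ : ℝ → ℝ) := (IsometryEquiv.subRight L₁).isometry.lipschitz
    simpa using hγ₂.comp hsub.lipschitzOnWith hshift
  have hmaps : MapsTo γ (Icc 0 (L₁ + L₂)) M := by
    intro t ht
    by_cases htL : t ≤ L₁
    · exact heq₁ ⟨ht.1, htL⟩ ▸ hM₁ ⟨ht.1, htL⟩
    · have ht' : t ∈ Icc L₁ (L₁ + L₂) := ⟨(not_le.1 htL).le, ht.2⟩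
      exact heq₂ ht' ▸ hM₂ (hshift ht')
  have h₀ : γ 0 = γ₁ 0 := heq₁ ⟨le_rfl, hL₁⟩
  have hend : γ (L₁ + L₂) = γ₂ L₂ := by simpa using heq₂ ⟨le_add_of_nonneg_right hL₂, le_rfl⟩
  rw [← h₀, ← hend]
  exact pathMetric_le_of_lipschitzOnWith (add_nonneg hL₁ hL₂) hlip hmaps

end PathMetric

section Geodesic

variable {X : Type*} [PseudoMetricSpace X]

lemma IsGeodesicLine.isometry {γ : ℝ → X} (hγ : IsGeodesicLine γ) : Isometry γ :=
  Isometry.of_dist_eq fun s t => (hγ s t).trans (Real.dist_eq s t).symm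

lemma IsGeodesicLine.lipschitzOnWith_comp_sub {W Z : Type*} [PseudoMetricSpace W]
    [PseudoMetricSpace Z] {γ : ℝ → X} (hγ : IsGeodesicLine γ) {f : Z → ℝ} (hf : LipschitzWith 1 f)
    {u : W → Z} {s : Set W}
    (hu : LipschitzOnWith 1 u s) (k : ℝ) : LipschitzOnWith 1 (fun t => γ (f (u t) - k)) s := by
  have hsub : LipschitzWith 1 (· - k : ℝ → ℝ) := (IsometryEquiv.subRight k).isometry.lipschitz
  simpa [Function.comp_def] using
    (hγ.isometry.lipschitz.comp (hsub.comp hf)).comp_lipschitzOnWith hu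

lemma IsGeodesicSpace.exists_lipschitzOnWith (hX : IsGeodesicSpace X) (x y : X) :
    ∃ γ : ℝ → X, γ 0 = x ∧ γ (dist x y) = y ∧ LipschitzOnWith 1 γ (Icc 0 (dist x y)) := by
  obtain ⟨γ, h0, h1, hγ⟩ := hX x y
  exact ⟨γ, h0, h1, LipschitzOnWith.of_dist_le_mul fun s hs t ht => by
    simp [hγ s hs t ht, Real.dist_eq]⟩

end Geodesic

lemma LipschitzOnWith.of_dist_le_add {W Z Z₁ Z₂ : Type*} [PseudoMetricSpace W]
    [PseudoMetricSpace Z] [PseudoMetricSpace Z₁] [PseudoMetricSpace Z₂] {γ : W → Z} {u : W → Z₁}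
    {v : W → Z₂} {Ku Kv : ℝ≥0} {s : Set W}
    (hu : LipschitzOnWith Ku u s) (hv : LipschitzOnWith Kv v s)
    (hγ : ∀ x y, dist (γ x) (γ y) ≤ dist (u x) (u y) + dist (v x) (v y)) :
    LipschitzOnWith (Ku + Kv) γ s := by
  refine LipschitzOnWith.of_dist_le_mul fun x hx y hy => ?_
  calc dist (γ x) (γ y) ≤ dist (u x) (u y) + dist (v x) (v y) := hγ x y
    _ ≤ Ku * dist x y + Kv * dist x y :=
        add_le_add (hu.dist_le_mul x hx y hy) (hv.dist_le_mul x hx y hy)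
    _ = ↑(Ku + Kv) * dist x y := by push_cast; ring

/-- under the fibre-product hypotheses (`T`, `Y` geodesic, `c`, `b` 1-Lipschitz
admitting through every point a unit-speed geodesic line), the shortest-path metric `d_M` on
`M = {(x,y) : c x = b y}` satisfies `d ≤ d_M ≤ 4 d`, where `d` is the sum metric of `T × Y`;
hence `d` and `d_M` are bilipschitz equivalent. -/
theorem fibreProduct_pathMetric_bilipschitz
    {T Y : Type*} [MetricSpace T] [MetricSpace Y]
    (hT : IsGeodesicSpace T) (hY : IsGeodesicSpace Y)
    (c : T → ℝ) (b : Y → ℝ)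
    (hc : LipschitzWith 1 c) (hb : LipschitzWith 1 b)
    (hlineT : ∀ x : T, ∃ β : ℝ → T, IsGeodesicLine β ∧ β 0 = x ∧
      ∀ u : ℝ, c (β u) = c x + u)
    (hlineY : ∀ y : Y, ∃ α : ℝ → Y, IsGeodesicLine α ∧ α 0 = y ∧
      ∀ u : ℝ, b (α u) = b y + u)
    -- `T × Y` is equipped with the sum metric
    (inst : PseudoMetricSpace (T × Y))
    (hinst : ∀ p q : T × Y, @dist _ inst.toDist p q = dist p.1 q.1 + dist p.2 q.2) :
    ∀ p ∈ {p : T × Y | c p.1 = b p.2}, ∀ q ∈ {p : T × Y | c p.1 = b p.2},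
      ENNReal.ofReal (@dist _ inst.toDist p q) ≤
          @pathMetric (T × Y) inst {p : T × Y | c p.1 = b p.2} p q ∧
        @pathMetric (T × Y) inst {p : T × Y | c p.1 = b p.2} p q ≤
          ENNReal.ofReal (4 * @dist _ inst.toDist p q) := by
  let _ := inst
  intro p (hp : c p.1 = b p.2) q (hq : c q.1 = b q.2)
  refine ⟨ofReal_dist_le_pathMetric _ p q, ?_⟩
  obtain ⟨σ, hσ0, hσ1, hσ⟩ := hT.exists_lipschitzOnWith p.1 q.1
  obtain ⟨α, hα, hα0, hbα⟩ := hlineY p.2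
  obtain ⟨β, hβ, hβ0, hcβ⟩ := hlineT q.1
  set y' := α (c q.1 - b p.2)
  obtain ⟨τ, hτ0, hτ1, hτ⟩ := hY.exists_lipschitzOnWith y' q.2
  have hy : dist y' q.2 ≤ dist p.1 q.1 + dist p.2 q.2 := calc
    dist y' q.2 ≤ dist y' p.2 + dist p.2 q.2 := dist_triangle _ _ _
    _ = dist (c q.1) (c p.1) + dist p.2 q.2 := by
        rw [← hα0, hα, sub_zero, Real.dist_eq, hp]
    _ ≤ dist p.1 q.1 + dist p.2 q.2 := by
        grw [dist_comm, hc.dist_le_mul]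
        simp
  have key := pathMetric_le_of_lipschitzOnWith_trans (M := {p : T × Y | c p.1 = b p.2})
    (γ₁ := fun t => (σ t, α (c (σ t) - b p.2))) (γ₂ := fun t => (β (b (τ t) - c q.1), τ t))
    dist_nonneg dist_nonneg
    (hσ.of_dist_le_add (hα.lipschitzOnWith_comp_sub hc hσ _) fun _ _ => (hinst _ _).le)
    ((hβ.lipschitzOnWith_comp_sub hb hτ _).of_dist_le_add hτ fun _ _ => (hinst _ _).le)
    (fun t _ => by simp [hbα]) (fun t _ => by simp [hcβ]) (by simp [hσ1, hτ0, y', hbα, hβ0])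
  simp only [hσ0, hτ1, hp, ← hq, sub_self, hα0, hβ0, Prod.mk.eta] at key
  refine key.trans (ENNReal.ofReal_le_ofReal ?_)
  rw [hinst]
  norm_num
  linarith [dist_nonneg (x := p.2) (y := q.2)]
end

section
/- For any simplicial tree T (viewed as a metric space with the path metric) and any p > 1, the L^p-compression exponent of T equals 1: α*_p(T) = 1. In particular, for every ε > 0 there is a large-scale Lipschitz map f : T → L^p with d(f(x),f(y)) ≥ C·d(x,y)^{1−ε} − D for some constants C > 0, D ≥ 0. -/
/-!
Root the tree at `r` and send a vertex `v` to `f v = ∑ φ(d(u, v)) • e_u`, the sum running over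
the vertices `u` of the path from `r` to `v`, where the `e_u` are indicators of disjoint unit
intervals (an isometric copy of `ℓ^p` in `L^p`) and
`φ(k) = ∑_{j ≤ k} (j + 1) ^ (a - 1) ≥ (k + 1) ^ a`.
Passing from `v` to a child `w` adds `e_w` and raises every coefficient along the path by one
increment `(j + 2) ^ (a - 1)`; these are `p`-summable once `(1 - a) p > 1`, so `f` is Lipschitz.
If `m` is the last common vertex of the paths to `x` and `y`, the vertices beyond `m` on the
longer branch, `M ≥ d(x, y) / 2` of them, carry the coefficients `φ(0), …, φ(M - 1)` in one
image and `0` in the other, so `‖f x - f y‖ ^ p ≥ ∑_{k < M} φ(k) ^ p ≳ M ^ (a p + 1)`. Hence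
`‖f x - f y‖ ≳ d(x, y) ^ (a + 1 / p)`, and `a + 1 / p` can be any number in `[1 / p, 1)`.
-/

/-- A map between (pseudo)metric spaces is large-scale Lipschitz if
`dist (f x) (f y) ≤ A * dist x y + B` for some constants `A, B ≥ 0`. -/
def LargeScaleLipschitz {X Y : Type*} [PseudoMetricSpace X] [PseudoMetricSpace Y]
    (f : X → Y) : Prop :=
  ∃ A B : ℝ, 0 ≤ A ∧ 0 ≤ B ∧ ∀ x y : X, dist (f x) (f y) ≤ A * dist x y + B

/-- The compression exponent `α*_Z(X)`: the supremum of the `α ∈ [0,1]` for which some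
large-scale Lipschitz map `f : X → Z` satisfies `dist (f x) (f y) ≥ C * dist x y ^ α - D`
with `C > 0`, `D ≥ 0`. -/
noncomputable def compressionExponent (X Z : Type*) [PseudoMetricSpace X]
    [PseudoMetricSpace Z] : ℝ :=
  sSup {α : ℝ | α ∈ Set.Icc (0 : ℝ) 1 ∧ ∃ f : X → Z, LargeScaleLipschitz f ∧
    ∃ C D : ℝ, 0 < C ∧ 0 ≤ D ∧ ∀ x y : X, C * dist x y ^ α - D ≤ dist (f x) (f y)}

/-- The sum metric on a product of two pseudometric spaces:
`d((x,x'),(y,y')) = d(x,y) + d(x',y')`. -/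
noncomputable def sumPseudoMetric (X X' : Type*) [PseudoMetricSpace X]
    [PseudoMetricSpace X'] : PseudoMetricSpace (X × X') :=
  { dist := fun p q => dist p.1 q.1 + dist p.2 q.2
    dist_self := fun p => by simp
    dist_comm := fun p q => by simp [dist_comm]
    dist_triangle := fun p q r => by
      have h1 := dist_triangle p.1 q.1 r.1
      have h2 := dist_triangle p.2 q.2 r.2
      linarith }

open MeasureTheory

open Finset
open scoped Function ENNReal

namespace MeasureTheory

section Pointwise

variable {α ι M : Type*} {A : ι → Set α}

noncomputable def stepFunction [AddCommMonoid M] (A : ι → Set α) (s : Finset ι) (g : ι → M)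
    (t : α) : M :=
  ∑ i ∈ s, (A i).indicator (fun _ => g i) t

theorem stepFunction_apply_of_mem [AddCommMonoid M] (hA : Pairwise (Disjoint on A))
    {s : Finset ι} (g : ι → M) {i : ι} (hi : i ∈ s) {t : α} (ht : t ∈ A i) :
    stepFunction A s g t = g i := by
  rw [stepFunction, sum_eq_single_of_mem i hi, Set.indicator_of_mem ht]
  intro j _ hji
  exact Set.indicator_of_notMem (fun htj => (hA hji).ne_of_mem htj ht rfl) _

theorem stepFunction_apply_of_forall_notMem [AddCommMonoid M] {s : Finset ι} (g : ι → M) {t : α}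
    (ht : ∀ i ∈ s, t ∉ A i) : stepFunction A s g t = 0 :=
  sum_eq_zero fun i hi => Set.indicator_of_notMem (ht i hi) _

theorem enorm_stepFunction_rpow (hA : Pairwise (Disjoint on A)) (s : Finset ι) (g : ι → ℝ)
    {q : ℝ} (hq : 0 < q) (t : α) :
    ‖stepFunction A s g t‖ₑ ^ q = stepFunction A s (fun i => ‖g i‖ₑ ^ q) t := by
  by_cases ht : ∃ i ∈ s, t ∈ A i
  · obtain ⟨i, hi, hti⟩ := ht
    rw [stepFunction_apply_of_mem hA _ hi hti, stepFunction_apply_of_mem hA _ hi hti]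
  · simp only [not_exists, not_and] at ht
    rw [stepFunction_apply_of_forall_notMem _ ht, stepFunction_apply_of_forall_notMem _ ht,
      enorm_zero, ENNReal.zero_rpow_of_pos hq]

theorem stepFunction_sub [AddCommGroup M] (A : ι → Set α) (s : Finset ι) (g g' : ι → M) :
    stepFunction A s g - stepFunction A s g' = stepFunction A s (g - g') := by
  ext t
  simp only [stepFunction, Pi.sub_apply, ← sum_sub_distrib]
  congr! 1 with i
  by_cases ht : t ∈ A i <;> simp [ht]

theorem stepFunction_of_subset [AddCommMonoid M] (A : ι → Set α) {s s' : Finset ι} (hs : s ⊆ s')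
    {g : ι → M} (hg : ∀ i ∉ s, g i = 0) : stepFunction A s' g = stepFunction A s g := by
  ext t
  exact (sum_subset hs fun i _ hi => by simp [hg i hi]).symm

end Pointwise

variable {α ι : Type*} [MeasurableSpace α] {μ : Measure α} {A : ι → Set α}

theorem memLp_stepFunction (hAm : ∀ i, MeasurableSet (A i)) (hAμ : ∀ i, μ (A i) ≠ ∞)
    (p : ℝ≥0∞) (s : Finset ι) (g : ι → ℝ) : MemLp (stepFunction A s g) p μ :=
  memLp_finsetSum s fun i _ => memLp_indicator_const p (hAm i) (g i) (Or.inr (hAμ i))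

theorem eLpNorm_stepFunction (hAm : ∀ i, MeasurableSet (A i)) (hA : Pairwise (Disjoint on A))
    (hAμ : ∀ i, μ (A i) = 1) {p : ℝ≥0∞} (hp0 : p ≠ 0) (hptop : p ≠ ⊤) (s : Finset ι)
    (g : ι → ℝ) :
    eLpNorm (stepFunction A s g) p μ = (∑ i ∈ s, ‖g i‖ₑ ^ p.toReal) ^ (1 / p.toReal) := by
  rw [eLpNorm_eq_lintegral_rpow_enorm_toReal hp0 hptop]
  simp_rw [enorm_stepFunction_rpow hA s g (ENNReal.toReal_pos hp0 hptop), stepFunction]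
  rw [lintegral_finsetSum _ fun i _ => measurable_const.indicator (hAm i)]
  simp [lintegral_indicator (hAm _), hAμ]

theorem dist_toLp_stepFunction [DecidableEq ι] (hAm : ∀ i, MeasurableSet (A i))
    (hA : Pairwise (Disjoint on A)) (hAμ : ∀ i, μ (A i) = 1) {p : ℝ≥0∞} [Fact (1 ≤ p)]
    (hptop : p ≠ ⊤) {s s' : Finset ι} {g g' : ι → ℝ} (hg : ∀ i ∉ s, g i = 0)
    (hg' : ∀ i ∉ s', g' i = 0) (hf : MemLp (stepFunction A s g) p μ)
    (hf' : MemLp (stepFunction A s' g') p μ) :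
    dist hf.toLp hf'.toLp = (∑ i ∈ s ∪ s', |g i - g' i| ^ p.toReal) ^ (1 / p.toReal) := by
  have hp0 : p ≠ 0 := (zero_lt_one.trans_le Fact.out).ne'
  have hext : ∀ {s₀ : Finset ι} {g₀ : ι → ℝ}, s₀ ⊆ s ∪ s' → (∀ i ∉ s₀, g₀ i = 0) →
      ∀ hf₀ : MemLp (stepFunction A s₀ g₀) p μ,
        hf₀.toLp = (memLp_stepFunction hAm (by simp [hAμ]) p (s ∪ s') g₀).toLp :=
    fun hs hg₀ hf₀ => hf₀.toLp_congr _ (.of_forall fun t => by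
      rw [stepFunction_of_subset A hs hg₀])
  rw [hext subset_union_left hg hf, hext subset_union_right hg' hf', dist_eq_norm,
    ← MemLp.toLp_sub, Lp.norm_toLp, stepFunction_sub, eLpNorm_stepFunction hAm hA hAμ hp0 hptop,
    ← ENNReal.toReal_rpow, ENNReal.toReal_sum fun i _ => by finiteness]
  simp [← ENNReal.toReal_rpow]

theorem exists_pairwise_disjoint_volume_eq_one (ι : Type*) [Countable ι] :
    ∃ I : ι → Set ℝ, (∀ i, MeasurableSet (I i)) ∧ Pairwise (Disjoint on I) ∧
      ∀ i, volume (I i) = 1 := by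
  obtain ⟨e, he⟩ := Countable.exists_injective_nat ι
  refine ⟨fun i => Set.Ico (((e i : ℤ) : ℝ)) ((e i : ℤ) + 1), fun i => measurableSet_Ico,
    (Set.pairwise_disjoint_Ico_intCast ℝ).comp_of_injective (Nat.cast_injective.comp he),
    fun i => by simp⟩

end MeasureTheory

section Profile

noncomputable def profile (a : ℝ) (k : ℕ) : ℝ :=
  ∑ j ∈ range (k + 1), ((j : ℝ) + 1) ^ (a - 1)

variable {a : ℝ}

theorem profile_zero (a : ℝ) : profile a 0 = 1 := by
  simp [profile]

theorem profile_succ (a : ℝ) (k : ℕ) :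
    profile a (k + 1) = profile a k + ((k : ℝ) + 2) ^ (a - 1) := by
  rw [profile, sum_range_succ, ← profile]
  push_cast
  ring_nf

theorem profile_pos (a : ℝ) (k : ℕ) : 0 < profile a k :=
  sum_pos (fun j _ => by positivity) nonempty_range_add_one

theorem rpow_le_profile (ha : a ≤ 1) (k : ℕ) : ((k : ℝ) + 1) ^ a ≤ profile a k := by
  have hterm : ∀ j ∈ range (k + 1), ((k : ℝ) + 1) ^ (a - 1) ≤ ((j : ℝ) + 1) ^ (a - 1) :=
    fun j hj => Real.rpow_le_rpow_of_nonpos (by positivity)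
      (by gcongr; exact_mod_cast mem_range_succ_iff.mp hj) (by linarith)
  calc ((k : ℝ) + 1) ^ a = ((k + 1 : ℕ) : ℝ) * ((k : ℝ) + 1) ^ (a - 1) := by
        rw [Real.rpow_sub (by positivity), Real.rpow_one]
        push_cast
        field_simp
    _ ≤ profile a k := by simpa [profile] using card_nsmul_le_sum _ _ _ hterm

theorem pow_mul_add_one_le_sum_profile_rpow (ha : 0 ≤ a) (ha1 : a ≤ 1) {q : ℝ} (hq : 0 < q)
    (M : ℕ) : ((M : ℝ) / 2) ^ (a * q + 1) ≤ ∑ k ∈ range M, profile a k ^ q := by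
  have hupper : ∀ k ∈ range M \ range (M / 2), ((M : ℝ) / 2) ^ (a * q) ≤ profile a k ^ q := by
    intro k hk
    simp only [mem_sdiff, mem_range, not_lt] at hk
    have hk2 : (M : ℝ) / 2 ≤ (k : ℝ) + 1 := by
      rw [div_le_iff₀ two_pos]
      exact_mod_cast (by omega : M ≤ (k + 1) * 2)
    calc ((M : ℝ) / 2) ^ (a * q) ≤ (((k : ℝ) + 1) ^ a) ^ q := by
          rw [← Real.rpow_mul (by positivity)]
          exact Real.rpow_le_rpow (by positivity) hk2 (by positivity)
      _ ≤ profile a k ^ q := Real.rpow_le_rpow (by positivity) (rpow_le_profile ha1 k) hq.le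
  have hcard : (M : ℝ) / 2 ≤ #(range M \ range (M / 2)) := by
    rw [card_sdiff_of_subset (range_subset_range.mpr (Nat.div_le_self M 2)), card_range,
      card_range, div_le_iff₀ two_pos]
    exact_mod_cast (by omega : M ≤ (M - M / 2) * 2)
  calc ((M : ℝ) / 2) ^ (a * q + 1) = (M / 2 : ℝ) * ((M : ℝ) / 2) ^ (a * q) := by
        rw [Real.rpow_add_one' (by positivity) (by positivity), mul_comm]
    _ ≤ #(range M \ range (M / 2)) * ((M : ℝ) / 2) ^ (a * q) := by gcongr
    _ ≤ ∑ k ∈ range M \ range (M / 2), profile a k ^ q := by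
        simpa using card_nsmul_le_sum _ _ _ hupper
    _ ≤ ∑ k ∈ range M, profile a k ^ q :=
        sum_le_sum_of_subset_of_nonneg sdiff_subset fun k _ _ =>
          Real.rpow_nonneg (profile_pos a k).le q

theorem summable_rpow_profile_increment {q : ℝ} (hq : 1 < (1 - a) * q) :
    Summable fun j : ℕ => (((j : ℝ) + 2) ^ (a - 1)) ^ q := by
  have hsum := (summable_nat_add_iff 2).mpr (Real.summable_one_div_nat_rpow.mpr hq)
  refine hsum.congr fun j => ?_
  push_cast
  rw [← Real.rpow_mul (by positivity), one_div, ← Real.rpow_neg (by positivity)]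
  ring_nf

end Profile

namespace SimpleGraph

variable {V : Type*} {G : SimpleGraph V}

theorem Connected.countable [G.LocallyFinite] (hG : G.Connected) : Countable V := by
  obtain ⟨r⟩ := hG.nonempty
  let R : ℕ → Set V := fun n => {v | ∃ w : G.Walk v r, w.length = n}
  have hR : ∀ n, (R n).Countable := by
    intro n
    induction n with
    | zero =>
      exact (Set.countable_singleton r).mono fun v ⟨w, hw⟩ => Walk.eq_of_length_eq_zero hw
    | succ n ih =>
      refine (ih.biUnion fun u _ => (G.neighborSet u).toFinite.countable).mono ?_
      rintro v ⟨_ | ⟨h, w⟩, hw⟩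
      · simp at hw
      · exact Set.mem_biUnion (x := _) ⟨w, by simpa using hw⟩ h.symm
  have hcover : Set.univ ⊆ ⋃ n, R n := fun v _ =>
    Set.mem_iUnion.mpr ⟨_, (hG v r).some, rfl⟩
  exact Set.countable_univ_iff.mp ((Set.countable_iUnion hR).mono hcover)

namespace Walk

variable {u v w : V} {p : G.Walk u v}

theorem dist_getVert_of_length_eq_dist (hp : p.length = G.dist u v) {k : ℕ}
    (hk : k ≤ p.length) : G.dist u (p.getVert k) = k := by
  rw [← length_eq_dist_of_subwalk hp (p.isSubwalk_take k), take_length, min_eq_left hk]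

theorem getVert_dist_of_length_eq_dist [DecidableEq V] (hp : p.length = G.dist u v)
    (hw : w ∈ p.support) : p.getVert (G.dist u w) = w := by
  rw [← length_eq_dist_of_subwalk hp (p.isSubwalk_takeUntil hw), getVert_length_takeUntil]

theorem dist_add_dist_of_length_eq_dist [DecidableEq V] (hp : p.length = G.dist u v)
    (hw : w ∈ p.support) : G.dist u w + G.dist w v = G.dist u v := by
  rw [← length_eq_dist_of_subwalk hp (p.isSubwalk_takeUntil hw),
    ← length_eq_dist_of_subwalk hp (p.isSubwalk_dropUntil hw), ← length_append, take_spec, hp]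

end Walk

end SimpleGraph

section GraphLipschitz

variable {V : Type*} {G : SimpleGraph V}

theorem dist_le_mul_length_of_adj {X : Type*} [PseudoMetricSpace X] {f : V → X} {A : ℝ}
    (hf : ∀ x y, G.Adj x y → dist (f x) (f y) ≤ A) {u v : V} (w : G.Walk u v) :
    dist (f u) (f v) ≤ A * w.length := by
  induction w with
  | nil => simp
  | cons h w ih =>
    rw [SimpleGraph.Walk.length_cons, Nat.cast_succ, mul_add_one, add_comm]
    exact (dist_triangle _ _ _).trans (add_le_add (hf _ _ h) ih)

theorem dist_le_mul_dist_of_adj {X : Type*} [PseudoMetricSpace X] (hG : G.Connected)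
    {f : V → X} {A : ℝ} (hf : ∀ x y, G.Adj x y → dist (f x) (f y) ≤ A) (u v : V) :
    dist (f u) (f v) ≤ A * G.dist u v := by
  obtain ⟨w, hw⟩ := hG.exists_walk_length_eq_dist u v
  simpa [hw] using dist_le_mul_length_of_adj hf w

end GraphLipschitz

namespace SimpleGraph.IsTree

variable {V : Type*} {G : SimpleGraph V} (hT : G.IsTree)

noncomputable def geodesic (r v : V) : G.Walk r v :=
  (hT.connected.exists_path_of_dist r v).choose

theorem isPath_geodesic (r v : V) : (hT.geodesic r v).IsPath :=
  (hT.connected.exists_path_of_dist r v).choose_spec.1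

theorem length_geodesic (r v : V) : (hT.geodesic r v).length = G.dist r v :=
  (hT.connected.exists_path_of_dist r v).choose_spec.2

variable [DecidableEq V]

noncomputable def ancestors (r v : V) : Finset V :=
  (hT.geodesic r v).support.toFinset

variable {hT} {r u v x y : V}

theorem mem_ancestors : u ∈ hT.ancestors r v ↔ G.dist r u + G.dist u v = G.dist r v := by
  rw [ancestors, List.mem_toFinset]
  refine ⟨(hT.geodesic r v).dist_add_dist_of_length_eq_dist (hT.length_geodesic r v), fun h => ?_⟩
  obtain ⟨p, hp⟩ := hT.connected.exists_walk_length_eq_dist r u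
  obtain ⟨q, hq⟩ := hT.connected.exists_walk_length_eq_dist u v
  have hpq : (p.append q).IsPath :=
    (p.append q).isPath_of_length_eq_dist (by rw [Walk.length_append, hp, hq, h])
  have : p.append q = hT.geodesic r v :=
    Subtype.mk.inj <|
      (hT.isAcyclic.subsingleton_path r v).elim ⟨_, hpq⟩ ⟨_, hT.isPath_geodesic r v⟩
  rw [← this, Walk.mem_support_append_iff]
  exact Or.inl p.end_mem_support

theorem root_mem_ancestors : r ∈ hT.ancestors r v := by
  simp [mem_ancestors]

theorem self_mem_ancestors : v ∈ hT.ancestors r v := by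
  simp [mem_ancestors]

theorem injOn_dist_ancestors : Set.InjOn (G.dist · v) (hT.ancestors r v) := by
  intro u hu u' hu' (huu' : G.dist u v = G.dist u' v)
  have hlen := hT.length_geodesic r v
  rw [ancestors, Finset.mem_coe, List.mem_toFinset] at hu hu'
  have h := (hT.geodesic r v).dist_add_dist_of_length_eq_dist hlen hu
  have h' := (hT.geodesic r v).dist_add_dist_of_length_eq_dist hlen hu'
  rw [← Walk.getVert_dist_of_length_eq_dist hlen hu,
    ← Walk.getVert_dist_of_length_eq_dist hlen hu', show G.dist r u = G.dist r u' by omega]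

theorem exists_mem_ancestors_dist_eq {k : ℕ} (hk : k ≤ G.dist r v) :
    ∃ u ∈ hT.ancestors r v, G.dist u v = k := by
  have hlen := hT.length_geodesic r v
  set u := (hT.geodesic r v).getVert (G.dist r v - k)
  have hu : u ∈ hT.ancestors r v := List.mem_toFinset.mpr (Walk.getVert_mem_support _ _)
  have hru : G.dist r u = G.dist r v - k :=
    Walk.dist_getVert_of_length_eq_dist hlen (by omega)
  have := mem_ancestors.mp hu
  exact ⟨u, hu, by omega⟩

theorem ancestors_eq_insert_of_adj (hxy : G.Adj x y) (h : G.dist r x = G.dist r y + 1) :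
    hT.ancestors r x = insert x (hT.ancestors r y) := by
  have hy : y ∈ (hT.geodesic r x).support := by
    rw [← List.mem_toFinset, ← ancestors, mem_ancestors, dist_eq_one_iff_adj.mpr hxy.symm, h]
  rw [ancestors, ancestors, hT.isAcyclic.path_concat (hT.isPath_geodesic r y)
    (hT.isPath_geodesic r x) hxy.symm hy, Walk.support_concat]
  ext
  simp

end SimpleGraph.IsTree

section TreeEmbedding

open SimpleGraph

variable {V : Type*} [DecidableEq V] {G : SimpleGraph V} (hT : G.IsTree) (r : V) (a : ℝ)

-- `treeCoeff … v u` is the coefficient of `e_u` in `f v`, and `treeGap … p x y = ‖f x - f y‖ ^ p`.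
noncomputable def treeCoeff (v u : V) : ℝ :=
  if u ∈ hT.ancestors r v then profile a (G.dist u v) else 0

noncomputable def treeGap (q : ℝ) (x y : V) : ℝ :=
  ∑ u ∈ hT.ancestors r x ∪ hT.ancestors r y, |treeCoeff hT r a x u - treeCoeff hT r a y u| ^ q

variable {hT r a}

theorem treeCoeff_of_notMem {v u : V} (hu : u ∉ hT.ancestors r v) : treeCoeff hT r a v u = 0 :=
  if_neg hu

theorem treeGap_comm (q : ℝ) (x y : V) : treeGap hT r a q x y = treeGap hT r a q y x := by
  simp only [treeGap, union_comm, abs_sub_comm]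

theorem treeGap_le_of_adj_of_dist_eq {q : ℝ}
    (hsum : Summable fun j : ℕ => (((j : ℝ) + 2) ^ (a - 1)) ^ q) {x y : V} (hxy : G.Adj x y)
    (h : G.dist r x = G.dist r y + 1) :
    treeGap hT r a q x y ≤ 1 + ∑' j : ℕ, (((j : ℝ) + 2) ^ (a - 1)) ^ q := by
  have hx : x ∉ hT.ancestors r y := fun hx => by
    have := IsTree.mem_ancestors.mp hx
    omega
  have hterm : ∀ u ∈ hT.ancestors r y, |treeCoeff hT r a x u - treeCoeff hT r a y u| ^ q =
      (((G.dist u y : ℝ) + 2) ^ (a - 1)) ^ q := by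
    intro u hu
    have hux : u ∈ hT.ancestors r x := by
      rw [IsTree.ancestors_eq_insert_of_adj hxy h]
      exact mem_insert_of_mem hu
    have hdist : G.dist u x = G.dist u y + 1 := by
      have := IsTree.mem_ancestors.mp hu
      have := IsTree.mem_ancestors.mp hux
      omega
    rw [treeCoeff, treeCoeff, if_pos hux, if_pos hu, hdist, profile_succ, add_sub_cancel_left,
      abs_of_pos (by positivity)]
  rw [treeGap, IsTree.ancestors_eq_insert_of_adj hxy h, insert_union, union_self,
    sum_insert hx, treeCoeff, if_pos IsTree.self_mem_ancestors,
    treeCoeff_of_notMem hx, dist_self, profile_zero, sub_zero, abs_one,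
    Real.one_rpow, sum_congr rfl hterm]
  refine add_le_add le_rfl ?_
  calc _ = ∑ j ∈ (hT.ancestors r y).image (G.dist · y), (((j : ℝ) + 2) ^ (a - 1)) ^ q :=
        (sum_image IsTree.injOn_dist_ancestors).symm
    _ ≤ _ := hsum.sum_le_tsum _ fun j _ => by positivity

theorem sum_profile_le_treeGap {q : ℝ} {x y m : V} (hm : m ∈ hT.ancestors r x)
    (hmax : ∀ u ∈ hT.ancestors r x, u ∈ hT.ancestors r y → G.dist r u ≤ G.dist r m) :
    ∑ k ∈ range (G.dist r x - G.dist r m), profile a k ^ q ≤ treeGap hT r a q x y := by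
  set T := (hT.ancestors r x).filter fun u => G.dist r m < G.dist r u
  have hrange : T.image (G.dist · x) = range (G.dist r x - G.dist r m) := by
    have := IsTree.mem_ancestors.mp hm
    ext k
    simp only [mem_image, mem_filter, mem_range, T]
    constructor
    · rintro ⟨u, ⟨hu, hmu⟩, rfl⟩
      have := IsTree.mem_ancestors.mp hu
      omega
    · intro hk
      obtain ⟨u, hu, hux⟩ := IsTree.exists_mem_ancestors_dist_eq (hT := hT) (r := r)
        (v := x) (k := k) (by omega)
      have := IsTree.mem_ancestors.mp hu
      exact ⟨u, ⟨hu, by omega⟩, hux⟩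
  have hterm : ∀ u ∈ T, profile a (G.dist u x) ^ q =
      |treeCoeff hT r a x u - treeCoeff hT r a y u| ^ q := by
    intro u hu
    obtain ⟨hux, hmu⟩ := mem_filter.mp hu
    have huy : u ∉ hT.ancestors r y := fun huy => (hmax u hux huy).not_gt hmu
    rw [treeCoeff, if_pos hux, treeCoeff_of_notMem huy, sub_zero,
      abs_of_pos (profile_pos a _)]
  rw [← hrange, sum_image (IsTree.injOn_dist_ancestors.mono (filter_subset _ _)),
    sum_congr rfl hterm]
  exact sum_le_sum_of_subset_of_nonneg ((filter_subset _ _).trans subset_union_left)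
    fun u _ _ => by positivity

theorem exists_sum_profile_le_treeGap (q : ℝ) (x y : V) :
    ∃ M : ℕ, G.dist x y ≤ 2 * M ∧ ∑ k ∈ range M, profile a k ^ q ≤ treeGap hT r a q x y := by
  obtain ⟨m, hm, hmax⟩ := (hT.ancestors r x ∩ hT.ancestors r y).exists_max_image
    (G.dist r) ⟨r, mem_inter.mpr ⟨IsTree.root_mem_ancestors, IsTree.root_mem_ancestors⟩⟩
  obtain ⟨hmx, hmy⟩ := mem_inter.mp hm
  have hx := IsTree.mem_ancestors.mp hmx
  have hy := IsTree.mem_ancestors.mp hmy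
  have htri : G.dist x y ≤ G.dist x m + G.dist m y := hT.connected.dist_triangle
  have hxm : G.dist x m = G.dist m x := dist_comm
  rcases le_total (G.dist r y - G.dist r m) (G.dist r x - G.dist r m) with hle | hle
  · exact ⟨_, by omega,
      sum_profile_le_treeGap hmx fun u hux huy => hmax u (mem_inter.mpr ⟨hux, huy⟩)⟩
  · refine ⟨G.dist r y - G.dist r m, by omega, ?_⟩
    rw [treeGap_comm]
    exact sum_profile_le_treeGap hmy fun u huy hux => hmax u (mem_inter.mpr ⟨hux, huy⟩)

theorem treeGap_le_of_adj {q : ℝ} (hsum : Summable fun j : ℕ => (((j : ℝ) + 2) ^ (a - 1)) ^ q)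
    {x y : V} (hxy : G.Adj x y) :
    treeGap hT r a q x y ≤ 1 + ∑' j : ℕ, (((j : ℝ) + 2) ^ (a - 1)) ^ q := by
  rcases hT.dist_eq_dist_add_one_of_adj r hxy with h | h
  · exact treeGap_le_of_adj_of_dist_eq hsum hxy h
  · rw [treeGap_comm]
    exact treeGap_le_of_adj_of_dist_eq hsum hxy.symm h

theorem div_four_rpow_le_treeGap (ha : 0 ≤ a) (ha1 : a ≤ 1) {q : ℝ} (hq : 0 < q) (x y : V) :
    ((G.dist x y : ℝ) / 4) ^ (a * q + 1) ≤ treeGap hT r a q x y := by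
  obtain ⟨M, hM, hsum⟩ := exists_sum_profile_le_treeGap (hT := hT) (r := r) (a := a) q x y
  have hdM : (G.dist x y : ℝ) / 4 ≤ M / 2 := by
    have : (G.dist x y : ℝ) ≤ 2 * M := by exact_mod_cast hM
    linarith
  calc ((G.dist x y : ℝ) / 4) ^ (a * q + 1) ≤ ((M : ℝ) / 2) ^ (a * q + 1) :=
        Real.rpow_le_rpow (by positivity) hdM (by positivity)
    _ ≤ treeGap hT r a q x y := (pow_mul_add_one_le_sum_profile_rpow ha ha1 hq M).trans hsum

end TreeEmbedding

theorem exists_Lp_embedding_of_isTree {V : Type*} {G : SimpleGraph V} [G.LocallyFinite]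
    (hT : G.IsTree) {p : ℝ≥0∞} [Fact (1 ≤ p)] (hptop : p ≠ ⊤) {β : ℝ}
    (hβ₀ : 1 / p.toReal ≤ β) (hβ₁ : β < 1) :
    ∃ f : V → Lp ℝ p (volume : Measure ℝ),
      (∃ A : ℝ, 0 ≤ A ∧ ∀ x y, dist (f x) (f y) ≤ A * G.dist x y) ∧
      ∀ x y, (G.dist x y : ℝ) ^ β / 4 ^ β ≤ dist (f x) (f y) := by
  classical
  obtain ⟨r⟩ := hT.connected.nonempty
  have := hT.connected.countable
  obtain ⟨I, hIm, hId, hIμ⟩ := exists_pairwise_disjoint_volume_eq_one V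
  set q := p.toReal
  have hq0 : 0 < q := ENNReal.toReal_pos (zero_lt_one.trans_le Fact.out).ne' hptop
  set a := β - 1 / q
  have ha0 : 0 ≤ a := sub_nonneg.mpr hβ₀
  have ha1 : a ≤ 1 := by linarith [one_div_pos.mpr hq0]
  have hβa : (a * q + 1) * (1 / q) = β := by
    simp only [a]
    field_simp
    ring
  have hsummable : Summable fun j : ℕ => (((j : ℝ) + 2) ^ (a - 1)) ^ q := by
    refine summable_rpow_profile_increment ?_
    have : (1 - a) * q = (1 - β) * q + 1 := by
      simp only [a]
      field_simp
      ring
    nlinarith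
  have hf : ∀ v, MemLp (stepFunction I (hT.ancestors r v) (treeCoeff hT r a v)) p volume :=
    fun v => memLp_stepFunction hIm (by simp [hIμ]) p _ _
  have hdist : ∀ x y, dist (hf x).toLp (hf y).toLp = treeGap hT r a q x y ^ (1 / q) :=
    fun x y => dist_toLp_stepFunction hIm hId hIμ hptop (fun _ hu => treeCoeff_of_notMem hu)
      (fun _ hu => treeCoeff_of_notMem hu) (hf x) (hf y)
  set S := ∑' j : ℕ, (((j : ℝ) + 2) ^ (a - 1)) ^ q
  have hS : 0 ≤ S := tsum_nonneg fun j => by positivity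
  refine ⟨fun v => (hf v).toLp, ⟨(1 + S) ^ (1 / q), by positivity,
    dist_le_mul_dist_of_adj hT.connected fun x y hxy => ?_⟩, fun x y => ?_⟩
  · rw [hdist]
    exact Real.rpow_le_rpow (sum_nonneg fun u _ => by positivity)
      (treeGap_le_of_adj hsummable hxy) (by positivity)
  · rw [hdist, ← Real.div_rpow (by positivity) (by positivity), ← hβa,
      Real.rpow_mul (by positivity)]
    exact Real.rpow_le_rpow (by positivity) (div_four_rpow_le_treeGap ha0 ha1 hq0 x y)
      (by positivity)

theorem natCast_rpow_le_rpow_add_one (n : ℕ) {α β : ℝ} (h : α ≤ β) :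
    (n : ℝ) ^ α ≤ (n : ℝ) ^ β + 1 := by
  rcases Nat.eq_zero_or_pos n with rfl | hn
  · rw [Nat.cast_zero]
    linarith [Real.zero_rpow_le_one α, Real.zero_rpow_nonneg β]
  · linarith [Real.rpow_le_rpow_of_exponent_le (by exact_mod_cast hn : (1 : ℝ) ≤ n) h]

theorem compressionExponent_eq_one_of_forall {X Z : Type*} [PseudoMetricSpace X]
    [PseudoMetricSpace Z]
    (h : ∀ ε : ℝ, 0 < ε → ∃ f : X → Z, LargeScaleLipschitz f ∧ ∃ C D : ℝ, 0 < C ∧ 0 ≤ D ∧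
      ∀ x y : X, C * dist x y ^ (1 - ε) - D ≤ dist (f x) (f y)) :
    compressionExponent X Z = 1 := by
  refine csSup_eq_of_forall_le_of_forall_lt_exists_gt ⟨0, ?_⟩ (fun α hα => hα.1.2) fun w hw => ?_
  · exact ⟨⟨le_rfl, zero_le_one⟩, by simpa using h 1 one_pos⟩
  · set ε := min ((1 - w) / 2) 1
    have hε : 0 < ε := lt_min (by linarith) one_pos
    have hε₁ : ε ≤ 1 := min_le_right _ _
    have hεw : ε ≤ (1 - w) / 2 := min_le_left _ _
    exact ⟨1 - ε, ⟨⟨by linarith, by linarith⟩, h ε hε⟩, by linarith⟩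

/-- for a simplicial tree `T` (vertex set with the path metric) and any
`1 < p < ∞`, the `L^p`-compression exponent of `T` equals `1`; in particular for every
`ε > 0` there is a large-scale Lipschitz map `f : T → L^p` with
`‖f x - f y‖ ≥ C * d(x,y)^(1-ε) - D`. -/
theorem tree_compressionExponent_eq_one
    {V : Type*} (G : SimpleGraph V) (htree : G.IsTree) [G.LocallyFinite]
    (mV : PseudoMetricSpace V)
    -- the metric on the tree is the simplicial path metric
    (hdist : ∀ u v : V, @dist V mV.toDist u v = (G.dist u v : ℝ))
    (p : ENNReal) [Fact (1 ≤ p)] (hp1 : 1 < p) (hptop : p ≠ ⊤) :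
    @compressionExponent V (Lp ℝ p (volume : Measure ℝ)) mV _ = 1 ∧
      ∀ ε : ℝ, 0 < ε →
        ∃ f : V → Lp ℝ p (volume : Measure ℝ),
          @LargeScaleLipschitz V _ mV _ f ∧
          ∃ C D : ℝ, 0 < C ∧ 0 ≤ D ∧
            ∀ x y : V, C * (@dist V mV.toDist x y) ^ ((1 : ℝ) - ε) - D ≤
              dist (f x) (f y) := by
  let _ : PseudoMetricSpace V := mV
  have hq : 1 < p.toReal := by
    simpa using (ENNReal.toReal_lt_toReal ENNReal.one_ne_top hptop).mpr hp1
  have hbound : ∀ ε : ℝ, 0 < ε → ∃ f : V → Lp ℝ p (volume : Measure ℝ),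
      LargeScaleLipschitz f ∧ ∃ C D : ℝ, 0 < C ∧ 0 ≤ D ∧
        ∀ x y : V, C * dist x y ^ (1 - ε) - D ≤ dist (f x) (f y) := by
    intro ε hε
    have hinv : 1 / p.toReal < 1 := (div_lt_one (by positivity)).mpr hq
    obtain ⟨β, hβε, hβ₀, hβ₁⟩ : ∃ β, 1 - ε ≤ β ∧ 1 / p.toReal ≤ β ∧ β < 1 :=
      ⟨max (1 - ε) ((1 + 1 / p.toReal) / 2), le_max_left _ _,
        le_max_of_le_right (by linarith), max_lt (by linarith) (by linarith)⟩
    obtain ⟨f, ⟨A, hA, hup⟩, hlow⟩ := exists_Lp_embedding_of_isTree htree hptop hβ₀ hβ₁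
    refine ⟨f, ⟨A, 0, hA, le_rfl, fun x y => by simpa [hdist] using hup x y⟩,
      1 / 4 ^ β, 1 / 4 ^ β, by positivity, by positivity, fun x y => ?_⟩
    rw [hdist]
    calc 1 / 4 ^ β * (G.dist x y : ℝ) ^ (1 - ε) - 1 / 4 ^ β
        = ((G.dist x y : ℝ) ^ (1 - ε) - 1) / 4 ^ β := by ring
      _ ≤ (G.dist x y : ℝ) ^ β / 4 ^ β := by
        gcongr
        linarith [natCast_rpow_le_rpow_add_one (G.dist x y) hβε]
      _ ≤ dist (f x) (f y) := hlow x y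
  exact ⟨compressionExponent_eq_one_of_forall hbound, hbound⟩
end
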